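/- Let X and Y be real Hilbert spaces, A : X → X a bounded linear operator with A + A* = −Q where Q is a bounded positive semidefinite self-adjoint operator, and C : X → Y a bounded operator such that the system is exactly observable at time T > 0 with constant δ > 0. Let f : [0,T] → X be continuous, y ∈ L²(0,T;Y), k : [0,T] → ℝ continuous, and P(s) := e^{sA} e^{sA*}. Suppose x° ∈ X satisfies ∫₀ᵀ e^{sA*} C* ( y(s) − C z[x°](s) ) ds = 0 and x̃ ∈ X satisfies ∫₀ᵀ e^{−sA} k(s) C* ( y(s) − C z[x̃](s) ) ds = 0, where z[x](t) := e^{tA} x + ∫₀ᵗ e^{(t−s)A} f(s) ds. If ‖ e^{−sA} ( P(s) − k(s) I ) ‖ ≤ γ for all s ∈ [0,T], then ‖x° − x̃‖ ≤ (γ ‖C‖ √T / δ) ‖ y − C z[x̃] ‖_{L²(0,T;Y)}. -/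

import Mathlib

open MeasureTheory NormedSpace ContinuousLinearMap RealInnerProductSpace Set

/-- The mild solution `z[x](t) = e^{tA} x + ∫₀ᵗ e^{(t−s)A} f(s) ds` of
`ż = Az + f`, `z(0) = x`, for a bounded generator `A`. -/
noncomputable def mildSol {X : Type*} [NormedAddCommGroup X] [InnerProductSpace ℝ X]
    [CompleteSpace X] (A : X →L[ℝ] X) (f : ℝ → X) (x : X) (t : ℝ) : X :=
  exp (t • A) x + ∫ s in (0:ℝ)..t, exp ((t - s) • A) (f s)

/-!
Write `d = x° − x̃`, `e = y − C z[x̃]` and `Φ(s) = C e^{sA}`. Since `z[x°] = z[x̃] + e^{sA} d`, the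
equation for `x°` is the normal equation `∫ Φ(s)* (e − Φ(s) d) = 0`; pairing it with `d` and using
observability gives `δ ‖d‖² ≤ ⟪d, ∫ e^{sA*} C* e⟫`. By the equation for `x̃`, subtracting
`∫ k e^{−sA} C* e = 0` does not change this integral, and `e^{sA*} − k e^{−sA} = e^{−sA} (P − k)`
has norm at most `γ`; hence `‖∫ e^{sA*} C* e‖ ≤ γ ‖C‖ ∫ ‖e‖ ≤ γ ‖C‖ √T ‖e‖_{L²}` by Cauchy–Schwarz.
-/

section ExpSmul

variable {𝔸 : Type*} [NormedRing 𝔸] [NormedAlgebra ℝ 𝔸] [CompleteSpace 𝔸]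

theorem continuous_exp_smul (a : 𝔸) : Continuous fun s : ℝ => exp (s • a) := by
  let _ := NormedAlgebra.restrictScalars ℚ ℝ 𝔸
  exact exp_continuous.comp (continuous_id.smul continuous_const)

theorem exp_sub_smul (a : 𝔸) (t s : ℝ) : exp ((t - s) • a) = exp (t • a) * exp (s • -a) := by
  let _ := NormedAlgebra.restrictScalars ℚ ℝ 𝔸
  rw [sub_smul, sub_eq_add_neg, ← neg_smul, neg_smul, smul_neg]
  exact exp_add_of_commute (((Commute.refl a).smul_left t).smul_right s).neg_right

theorem exp_smul_neg_mul_exp_smul (a : 𝔸) (s : ℝ) : exp (s • -a) * exp (s • a) = 1 := by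
  simpa using (exp_sub_smul (-a) s s).symm

theorem exp_smul_neg_mul_exp_smul_mul_sub (a b : 𝔸) (s c : ℝ) :
    exp (s • -a) * (exp (s • a) * b - c • 1) = b - c • exp (s • -a) := by
  rw [mul_sub, ← mul_assoc, exp_smul_neg_mul_exp_smul, one_mul, mul_smul_comm, mul_one]

end ExpSmul

section Integrals

variable {α E F : Type*} [MeasurableSpace α] {μ : Measure α}
  [NormedAddCommGroup E] [NormedAddCommGroup F]

theorem IntegrableOn.continuousOn_clm_apply_of_subset [TopologicalSpace α]
    [OpensMeasurableSpace α] [SecondCountableTopology α] [NormedSpace ℝ E] [NormedSpace ℝ F]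
    {Φ : α → E →L[ℝ] F} {g : α → E} {K A : Set α} (hΦ : ContinuousOn Φ K)
    (hg : IntegrableOn g A μ) (hK : IsCompact K) (hA : MeasurableSet A) (hAK : A ⊆ K) :
    IntegrableOn (fun t => Φ t (g t)) A μ := by
  obtain ⟨M, hM⟩ := hK.exists_bound_of_continuousOn hΦ
  exact (ContinuousLinearMap.id ℝ (E →L[ℝ] F)).integrable_of_bilin_of_bdd_left M
    ((hΦ.mono hAK).aestronglyMeasurable hA)
    (ae_restrict_of_forall_mem hA fun t ht => hM t (hAK ht)) hg

theorem ContinuousOn.memLp_restrict_of_subset [TopologicalSpace α] [OpensMeasurableSpace α]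
    [SecondCountableTopology α] {g : α → E} {K A : Set α} [IsFiniteMeasure (μ.restrict A)]
    (hg : ContinuousOn g K) (hK : IsCompact K) (hA : MeasurableSet A) (hAK : A ⊆ K)
    (p : ENNReal) : MemLp g p (μ.restrict A) := by
  obtain ⟨M, hM⟩ := hK.exists_bound_of_continuousOn hg
  exact .of_bound ((hg.mono hAK).aestronglyMeasurable hA) M
    (ae_restrict_of_forall_mem hA fun t ht => hM t (hAK ht))

theorem norm_integral_apply_le_of_integral_apply_eq_zero [NormedSpace ℝ E] [NormedSpace ℝ F]
    {U V : α → E →L[ℝ] F} {g : α → E} {c : ℝ} (hU : Integrable (fun s => U s (g s)) μ)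
    (hV : Integrable (fun s => V s (g s)) μ)
    (hg : Integrable g μ) (hV₀ : ∫ s, V s (g s) ∂μ = 0) (hUV : ∀ᵐ s ∂μ, ‖U s - V s‖ ≤ c) :
    ‖∫ s, U s (g s) ∂μ‖ ≤ c * ∫ s, ‖g s‖ ∂μ := by
  have hsub : ∫ s, U s (g s) ∂μ = ∫ s, (U s - V s) (g s) ∂μ := by
    simp only [sub_apply, integral_sub hU hV, hV₀, sub_zero]
  rw [hsub, ← integral_const_mul]
  refine norm_integral_le_of_norm_le (hg.norm.const_mul c) ?_
  filter_upwards [hUV] with s hs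
  exact ((U s - V s).le_opNorm (g s)).trans (mul_le_mul_of_nonneg_right hs (norm_nonneg _))

theorem integral_norm_le_sqrt_measureReal_mul_sqrt_integral_norm_sq [IsFiniteMeasure μ]
    {g : α → E} (hg : MemLp g 2 μ) :
    ∫ s, ‖g s‖ ∂μ ≤ √(μ.real univ) * √(∫ s, ‖g s‖ ^ 2 ∂μ) := by
  have h2 : ENNReal.ofReal 2 = 2 := by norm_num
  have := integral_mul_le_Lp_mul_Lq_of_nonneg Real.HolderConjugate.two_two
    (ae_of_all μ fun _ => zero_le_one) (ae_of_all μ fun s => norm_nonneg (g s))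
    (h2 ▸ memLp_const 1) (h2 ▸ hg.norm)
  simpa [Real.sqrt_eq_rpow] using this

end Integrals

theorem norm_le_norm_div_of_mul_sq_le_inner {H : Type*} [NormedAddCommGroup H]
    [InnerProductSpace ℝ H] {δ : ℝ} {d w : H} (hδ : 0 < δ) (h : δ * ‖d‖ ^ 2 ≤ ⟪d, w⟫) :
    ‖d‖ ≤ ‖w‖ / δ := by
  rw [le_div_iff₀ hδ]
  rcases (norm_nonneg d).eq_or_lt with hd | hd
  · rw [← hd, zero_mul]; positivity
  · nlinarith [real_inner_le_norm d w]

section Hilbert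

variable {X : Type*} [NormedAddCommGroup X] [InnerProductSpace ℝ X] [CompleteSpace X]

theorem exp_smul_adjoint (A : X →L[ℝ] X) (s : ℝ) :
    exp (s • adjoint A) = adjoint (exp (s • A)) := by
  have h : s • adjoint A = star (s • A) := by rw [star_smul, star_trivial, star_eq_adjoint]
  rw [h, ← star_exp, star_eq_adjoint]

theorem mildSol_eq_exp_smul_apply (A : X →L[ℝ] X) {f : ℝ → X} (x : X) {t : ℝ}
    (hf : IntervalIntegrable (fun s => exp (s • -A) (f s)) volume 0 t) :
    mildSol A f x t = exp (t • A) (x + ∫ s in (0:ℝ)..t, exp (s • -A) (f s)) := by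
  rw [mildSol, map_add, ← (exp (t • A)).intervalIntegral_comp_comm hf]
  congr 2 with s
  rw [exp_sub_smul A t s]
  rfl

theorem continuousOn_mildSol (A : X →L[ℝ] X) {f : ℝ → X} (x : X) {T : ℝ}
    (hf : ContinuousOn f (Icc 0 T)) : ContinuousOn (mildSol A f x) (Icc 0 T) := by
  rcases lt_or_ge T 0 with hT | hT
  · simp [Icc_eq_empty_of_lt hT]
  have hg : ContinuousOn (fun s => exp (s • -A) (f s)) (uIcc 0 T) := by
    rw [uIcc_of_le hT]
    exact (continuous_exp_smul (-A)).continuousOn.clm_apply hf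
  have hprim :=
    intervalIntegral.continuousOn_primitive_interval (hg.integrableOn_uIcc (μ := volume))
  rw [uIcc_of_le hT] at hg hprim
  refine ((continuous_exp_smul A).continuousOn.clm_apply (continuousOn_const.add hprim)).congr
    fun t ht => mildSol_eq_exp_smul_apply A x ?_
  exact (hg.mono (Icc_subset_Icc_right ht.2)).intervalIntegrable_of_Icc ht.1

theorem memLp_sub_mildSol {Y : Type*} [NormedAddCommGroup Y] [NormedSpace ℝ Y]
    (C : X →L[ℝ] Y) (A : X →L[ℝ] X) {f : ℝ → X} (x : X) {y : ℝ → Y} {T : ℝ} {p : ENNReal}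
    (hy : MemLp y p (volume.restrict (Ioc 0 T))) (hf : ContinuousOn f (Icc 0 T)) :
    MemLp (fun s => y s - C (mildSol A f x s)) p (volume.restrict (Ioc 0 T)) :=
  hy.sub <| (C.continuous.comp_continuousOn (continuousOn_mildSol A x hf)).memLp_restrict_of_subset
    isCompact_Icc measurableSet_Ioc Ioc_subset_Icc_self p

theorem sub_mildSol_sub_exp_smul_apply {Y : Type*} [NormedAddCommGroup Y] [NormedSpace ℝ Y]
    (C : X →L[ℝ] Y) (A : X →L[ℝ] X) (f : ℝ → X) (v : Y) (x x' : X) (t : ℝ) :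
    v - C (mildSol A f x' t) - C (exp (t • A) (x - x')) = v - C (mildSol A f x t) := by
  simp only [mildSol, map_sub, map_add]
  abel

variable {Y : Type*} [NormedAddCommGroup Y] [InnerProductSpace ℝ Y] [CompleteSpace Y]

theorem adjoint_comp_exp_smul (C : X →L[ℝ] Y) (A : X →L[ℝ] X) (s : ℝ) :
    adjoint (C ∘L exp (s • A)) = exp (s • adjoint A) ∘L adjoint C := by
  rw [adjoint_comp, exp_smul_adjoint]

theorem norm_adjoint_comp_exp_smul_sub_le (C : X →L[ℝ] Y) (A : X →L[ℝ] X) {s c γ : ℝ}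
    (h : ‖exp (s • -A) ∘L (exp (s • A) ∘L exp (s • adjoint A) - c • 1)‖ ≤ γ) :
    ‖adjoint (C ∘L exp (s • A)) - c • exp (s • -A) ∘L adjoint C‖ ≤ γ * ‖C‖ := by
  rw [← mul_def, ← mul_def, exp_smul_neg_mul_exp_smul_mul_sub] at h
  rw [adjoint_comp_exp_smul, ← smul_comp, ← sub_comp, ← adjoint.norm_map C]
  exact (opNorm_comp_le _ _).trans (by gcongr)

theorem integral_norm_apply_sq_eq_inner_integral_adjoint {α : Type*} [MeasurableSpace α]
    {μ : Measure α} {Φ : α → X →L[ℝ] Y} {e : α → Y} {d : X}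
    (he : Integrable (fun s => adjoint (Φ s) (e s)) μ)
    (hd : Integrable (fun s => adjoint (Φ s) (Φ s d)) μ)
    (hnormal : ∫ s, adjoint (Φ s) (e s - Φ s d) ∂μ = 0) :
    ∫ s, ‖Φ s d‖ ^ 2 ∂μ = ⟪d, ∫ s, adjoint (Φ s) (e s) ∂μ⟫ := by
  simp only [map_sub, integral_sub he hd, sub_eq_zero] at hnormal
  rw [hnormal, ← integral_inner hd]
  congr 1 with s
  rw [adjoint_inner_right, real_inner_self_eq_norm_sq]

end Hilbert

theorem aposteriori_bias_bound_general
    {X Y : Type*} [NormedAddCommGroup X] [InnerProductSpace ℝ X] [CompleteSpace X]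
    [NormedAddCommGroup Y] [InnerProductSpace ℝ Y] [CompleteSpace Y]
    (A : X →L[ℝ] X)
    (C : X →L[ℝ] Y) (T δ : ℝ) (hT : 0 < T) (hδ : 0 < δ)
    (hobs : ∀ x : X, δ * ‖x‖ ^ 2 ≤ ∫ s in (0:ℝ)..T, ‖C (exp (s • A) x)‖ ^ 2)
    (f : ℝ → X) (hf : ContinuousOn f (Icc 0 T))
    (y : ℝ → Y) (hy : MemLp y 2 (volume.restrict (Ioc 0 T)))
    (k : ℝ → ℝ) (hk : ContinuousOn k (Icc 0 T))
    (xo : X)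
    (hxo : ∫ s in (0:ℝ)..T, exp (s • ContinuousLinearMap.adjoint A)
        (ContinuousLinearMap.adjoint C (y s - C (mildSol A f xo s))) = 0)
    (xt : X)
    (hxt : ∫ s in (0:ℝ)..T, k s •
        exp (s • (-A)) (ContinuousLinearMap.adjoint C (y s - C (mildSol A f xt s))) = 0)
    (γ : ℝ)
    (hγ : ∀ s ∈ Icc (0:ℝ) T,
      ‖(exp (s • (-A))).comp
          ((exp (s • A)).comp (exp (s • ContinuousLinearMap.adjoint A)) -
            k s • (1 : X →L[ℝ] X))‖ ≤ γ) :
    ‖xo - xt‖ ≤ γ * ‖C‖ * Real.sqrt T / δ *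
      Real.sqrt (∫ s in (0:ℝ)..T, ‖y s - C (mildSol A f xt s)‖ ^ 2) := by
  simp only [intervalIntegral.integral_of_le hT.le] at hobs hxo hxt ⊢
  set μ := volume.restrict (Ioc 0 T)
  set E : ℝ → Y := fun s => y s - C (mildSol A f xt s)
  set Φ : ℝ → X →L[ℝ] Y := fun s => C ∘L exp (s • A)
  have hΦ : Continuous Φ := continuous_const.clm_comp (continuous_exp_smul A)
  have hΦ' : Continuous fun s => adjoint (Φ s) := adjoint.continuous.comp hΦ
  have hE : MemLp E 2 μ := memLp_sub_mildSol C A xt hy hf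
  have hint {Ψ : ℝ → Y →L[ℝ] X} (hΨ : ContinuousOn Ψ (Icc 0 T)) :
      Integrable (fun s => Ψ s (E s)) μ :=
    IntegrableOn.continuousOn_clm_apply_of_subset hΨ (hE.integrable one_le_two) isCompact_Icc
      measurableSet_Ioc Ioc_subset_Icc_self
  have hgram : ∫ s, ‖Φ s (xo - xt)‖ ^ 2 ∂μ = ⟪xo - xt, ∫ s, adjoint (Φ s) (E s) ∂μ⟫ := by
    refine integral_norm_apply_sq_eq_inner_integral_adjoint (hint hΦ'.continuousOn)
      ((hΦ'.clm_apply (hΦ.clm_apply continuous_const)).integrableOn_Icc.mono_set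
        Ioc_subset_Icc_self) (.trans (integral_congr_ae (ae_of_all _ fun s => ?_)) hxo)
    simp only [Φ, E, adjoint_comp_exp_smul, comp_apply, sub_mildSol_sub_exp_smul_apply]
  have hbias : ‖∫ s, adjoint (Φ s) (E s) ∂μ‖ ≤ γ * ‖C‖ * ∫ s, ‖E s‖ ∂μ :=
    norm_integral_apply_le_of_integral_apply_eq_zero
      (V := fun s => k s • exp (s • -A) ∘L adjoint C) (hint hΦ'.continuousOn)
      (hint (hk.smul ((continuous_exp_smul (-A)).clm_comp continuous_const).continuousOn))
      (hE.integrable one_le_two) hxt (ae_restrict_of_forall_mem measurableSet_Ioc fun s hs =>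
        norm_adjoint_comp_exp_smul_sub_le C A (hγ s (Ioc_subset_Icc_self hs)))
  have hCS := integral_norm_le_sqrt_measureReal_mul_sqrt_integral_norm_sq hE
  rw [measureReal_restrict_apply_univ, Real.volume_real_Ioc_of_le hT.le, sub_zero] at hCS
  have hγ₀ : 0 ≤ γ := (norm_nonneg _).trans (hγ 0 ⟨le_rfl, hT.le⟩)
  calc ‖xo - xt‖ ≤ ‖∫ s, adjoint (Φ s) (E s) ∂μ‖ / δ :=
        norm_le_norm_div_of_mul_sq_le_inner hδ (hgram ▸ hobs (xo - xt))
    _ ≤ γ * ‖C‖ * (∫ s, ‖E s‖ ∂μ) / δ := by gcongr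
    _ ≤ γ * ‖C‖ * (√T * √(∫ s, ‖E s‖ ^ 2 ∂μ)) / δ := by gcongr
    _ = _ := by ring

/-- **(Abstract form of Theorem 4 of the paper.)** A posteriori bound on the bias between the
output-error minimizer `x°` and the limit `x̃` of the BFN method with the approximate scalar
gain modulation `k(s) ≈ P(s) = e^{sA}e^{sA*}`. -/
theorem aposteriori_bias_bound
    {X Y : Type*} [NormedAddCommGroup X] [InnerProductSpace ℝ X] [CompleteSpace X]
    [NormedAddCommGroup Y] [InnerProductSpace ℝ Y] [CompleteSpace Y]
    (A Q : X →L[ℝ] X)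
    (hAQ : A + ContinuousLinearMap.adjoint A = -Q)
    (hQsa : ContinuousLinearMap.adjoint Q = Q)
    (hQpos : ∀ x : X, 0 ≤ ⟪Q x, x⟫)
    (C : X →L[ℝ] Y) (T δ : ℝ) (hT : 0 < T) (hδ : 0 < δ)
    (hobs : ∀ x : X, δ * ‖x‖ ^ 2 ≤ ∫ s in (0:ℝ)..T, ‖C (exp (s • A) x)‖ ^ 2)
    (f : ℝ → X) (hf : ContinuousOn f (Icc 0 T))
    (y : ℝ → Y) (hy : MemLp y 2 (volume.restrict (Ioc 0 T)))
    (k : ℝ → ℝ) (hk : ContinuousOn k (Icc 0 T))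
    (xo : X)
    (hxo : ∫ s in (0:ℝ)..T, exp (s • ContinuousLinearMap.adjoint A)
        (ContinuousLinearMap.adjoint C (y s - C (mildSol A f xo s))) = 0)
    (xt : X)
    (hxt : ∫ s in (0:ℝ)..T, k s •
        exp (s • (-A)) (ContinuousLinearMap.adjoint C (y s - C (mildSol A f xt s))) = 0)
    (γ : ℝ)
    (hγ : ∀ s ∈ Icc (0:ℝ) T,
      ‖(exp (s • (-A))).comp
          ((exp (s • A)).comp (exp (s • ContinuousLinearMap.adjoint A)) -
            k s • (1 : X →L[ℝ] X))‖ ≤ γ) :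
    ‖xo - xt‖ ≤ γ * ‖C‖ * Real.sqrt T / δ *
      Real.sqrt (∫ s in (0:ℝ)..T, ‖y s - C (mildSol A f xt s)‖ ^ 2) :=
  aposteriori_bias_bound_general A C T δ hT hδ hobs f hf y hy k hk xo hxo xt hxt γ hγ
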